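/- arXiv:2305.18202 — 4 statements merged into one kernel-verified Lean document; each statement's English description precedes it below -/
import Mathlib

section
/- Let α, δ ∈ ℝ, β > 0, and let ω(k) := −iβk³ + iαk² + iδk. Suppose k ∈ ℂ satisfies Im(k) ≥ 0 and 3(Re(k) − α/(3β))² − (Im(k))² − (α² + 3βδ)/(3β²) ≤ 0 (i.e. k lies in the closure of the region D⁺). Then every ν ∈ ℂ satisfying the quadratic equation β(ν² + kν + k²) − α(ν + k) − δ = 0 (equivalently, every solution ν of ω(ν) = ω(k), including the case ν = k when it solves this quadratic) satisfies Im(ν) ≤ 0. -/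
set_option maxHeartbeats 1000000


/-- The dispersion symbol of the higher-order Schrödinger equation:
`ω(k) = -iβk³ + iαk² + iδk`. -/
noncomputable def omegaHNLS (α β δ : ℝ) (k : ℂ) : ℂ :=
  -Complex.I * (β : ℂ) * k ^ 3 + Complex.I * (α : ℂ) * k ^ 2 + Complex.I * (δ : ℂ) * k

/-- If `k` lies in the closure of the region `D⁺`, then every solution `ν` of the quadratic
`β(ν² + kν + k²) − α(ν + k) − δ = 0` (equivalently, every solution of `ω(ν) = ω(k)`,
including `ν = k` when it solves the quadratic) satisfies `Im(ν) ≤ 0`. -/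
theorem im_nonpos_of_symmetry (α β δ : ℝ) (hβ : 0 < β) (k : ℂ)
    (hkim : 0 ≤ k.im)
    (hkD : 3 * (k.re - α / (3 * β)) ^ 2 - k.im ^ 2 - (α ^ 2 + 3 * β * δ) / (3 * β ^ 2) ≤ 0)
    (ν : ℂ)
    (hν : (β : ℂ) * (ν ^ 2 + k * ν + k ^ 2) - (α : ℂ) * (ν + k) - (δ : ℂ) = 0) :
    ν.im ≤ 0 := by
  set a := k.re with ha
  set b := k.im with hb
  set x := ν.re with hx
  set y := ν.im with hy0
  have hre : β * (x ^ 2 - y ^ 2 + (a * x - b * y) + (a ^ 2 - b ^ 2)) - α * (x + a) - δ = 0 := by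
    have := congrArg Complex.re hν
    simp [Complex.mul_re, Complex.mul_im, Complex.add_re, Complex.add_im, Complex.sub_re,
      Complex.sub_im, pow_two, pow_succ, Complex.ofReal_re, Complex.ofReal_im] at this
    linarith [this]
  have him : β * (2 * x * y + (a * y + b * x) + 2 * a * b) - α * (y + b) = 0 := by
    have := congrArg Complex.im hν
    simp [Complex.mul_re, Complex.mul_im, Complex.add_re, Complex.add_im, Complex.sub_re,
      Complex.sub_im, pow_two, pow_succ, Complex.ofReal_re, Complex.ofReal_im] at this
    linarith [this]
  have hβ' : β ≠ 0 := ne_of_gt hβ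
  -- clear denominators in hkD
  have hD' : 3 * β * a ^ 2 - 2 * α * a - β * b ^ 2 - δ ≤ 0 := by
    have h3 : (0:ℝ) < 3 * β ^ 2 := by positivity
    have h := mul_nonpos_of_nonneg_of_nonpos h3.le hkD
    have hexp : (3 * β ^ 2) *
        (3 * (a - α / (3 * β)) ^ 2 - b ^ 2 - (α ^ 2 + 3 * β * δ) / (3 * β ^ 2))
        = 3 * β * (3 * β * a ^ 2 - 2 * α * a - β * b ^ 2 - δ) := by
      field_simp
      ring
    rw [hexp] at h
    nlinarith [h]
  by_contra hcon
  push_neg at hcon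
  -- key quantities
  set P := 2 * β * x + β * a - α with hP
  set s := 3 * β * a - α with hs
  have hPb : P * (2 * y + b) = -(b * s) := by
    linear_combination 2 * him
  have hSb : 0 ≤ β * x ^ 2 - β * y ^ 2 + β * a * x - β * b * y - 2 * β * a ^ 2
      - α * x + α * a := by linarith
  have hS : 4 * β ^ 2 * y * (y + b) + s ^ 2 ≤ P ^ 2 := by
    have h4 := mul_nonneg hβ.le hSb
    rw [hP, hs]; nlinarith [h4]
  have hsq : (P * (2 * y + b)) ^ 2 = (b * s) ^ 2 := by rw [hPb]; ring
  have h2 : (4 * β ^ 2 * y * (y + b) + s ^ 2) * (2 * y + b) ^ 2 ≤ (b * s) ^ 2 := by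
    calc (4 * β ^ 2 * y * (y + b) + s ^ 2) * (2 * y + b) ^ 2
        ≤ P ^ 2 * (2 * y + b) ^ 2 := by
          exact mul_le_mul_of_nonneg_right hS (sq_nonneg _)
      _ = (b * s) ^ 2 := by rw [← hsq]; ring
  have hyb : 0 < y + b := by linarith
  have h3 : 0 < 4 * y * (y + b) * (β ^ 2 * (2 * y + b) ^ 2 + s ^ 2) := by
    have h4 : 0 < β ^ 2 * (2 * y + b) ^ 2 + s ^ 2 := by
      have : 0 < 2 * y + b := by linarith
      positivity
    have : 0 < 4 * y * (y + b) := by positivity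
    positivity
  nlinarith [h2, h3]
end

section
/- Let α, δ ∈ ℝ, β > 0, j ∈ ℕ, and let λ ≥ 0 satisfy λ = 0 if α² + 3βδ > 0 and λ > 2√(−(α² + 3βδ))/(3β) if α² + 3βδ ≤ 0. Define γ₁(m) := (α − √(3β²m² + α² + 3βδ))/(3β) + i·m for m ∈ [λ, ∞), and let τ(m) := i·ω(γ₁(m)), which is a real-valued function of m on [λ, ∞). Then there exists a constant c > 0, depending only on α, β, δ, λ, j, such that |γ₁(m)|^{2j} · |τ′(m)| ≤ c · (1 + τ(m)²)^{(j+1)/3} for all m ∈ [λ, ∞), where τ′ denotes the derivative of τ. -/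
/-- Parametrization of the left branch of `∂D⁺`:
`γ₁(m) = (α − √(3β²m² + α² + 3βδ))/(3β) + i m`. -/
noncomputable def gammaOne (α β δ : ℝ) (m : ℝ) : ℂ :=
  (((α - Real.sqrt (3 * β ^ 2 * m ^ 2 + α ^ 2 + 3 * β * δ)) / (3 * β) : ℝ) : ℂ)
    + Complex.I * (m : ℂ)

/-- The (real-valued) map `τ(m) = i·ω(γ₁(m))`, realized as the real part of `i·ω(γ₁(m))`. -/
noncomputable def tauGammaOne (α β δ : ℝ) (m : ℝ) : ℝ :=
  (Complex.I * omegaHNLS α β δ (gammaOne α β δ m)).re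

open Complex

lemma one_add_pow_six_le_of_cubic_le {β : ℝ} (hβ : 0 < β) (A B : ℝ) :
    ∃ C > 0, ∀ r t : ℝ, 0 ≤ r → β * r ^ 3 - A * r ^ 2 - B * r ≤ |t| →
      (1 + r) ^ 6 ≤ C * (1 + t ^ 2) := by
  set r₀ := 2 * (|A| + |B|) / β + 1
  have hr₀ : 1 ≤ r₀ := le_add_of_nonneg_left (by positivity)
  have hC₁ : 0 ≤ (1 + r₀) ^ 6 := by positivity
  have hC₂ : 0 < 256 / β ^ 2 := by positivity
  refine ⟨(1 + r₀) ^ 6 + 256 / β ^ 2, by positivity, fun r t hr ht => ?_⟩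
  have ht2 : 0 ≤ t ^ 2 := sq_nonneg t
  rcases le_or_gt r r₀ with hsmall | hlarge
  · calc (1 + r) ^ 6 ≤ (1 + r₀) ^ 6 := by gcongr
      _ ≤ ((1 + r₀) ^ 6 + 256 / β ^ 2) * (1 + t ^ 2) := by nlinarith
  · have hr1 : 1 ≤ r := by linarith
    have hβr : 2 * (|A| + |B|) ≤ β * r := by
      have := (div_le_iff₀ hβ).1 (by linarith : 2 * (|A| + |B|) / β ≤ r); linarith
    have hcubic : β * r ^ 3 / 2 ≤ |t| := by
      have hA : A * r ^ 2 ≤ |A| * r ^ 2 := by gcongr; exact le_abs_self A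
      have hB : B * r ≤ |B| * r ^ 2 :=
        calc B * r ≤ |B| * r := by gcongr; exact le_abs_self B
          _ ≤ |B| * r ^ 2 := by gcongr; exact le_self_pow₀ hr1 two_ne_zero
      nlinarith [mul_le_mul_of_nonneg_right hβr (sq_nonneg r)]
    have hsq : (β * r ^ 3 / 2) ^ 2 ≤ t ^ 2 := by
      rw [← sq_abs t]; gcongr
    calc (1 + r) ^ 6 ≤ (2 * r) ^ 6 := by gcongr; linarith
      _ = 256 / β ^ 2 * (β * r ^ 3 / 2) ^ 2 := by field_simp; ring
      _ ≤ 256 / β ^ 2 * t ^ 2 := by gcongr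
      _ ≤ ((1 + r₀) ^ 6 + 256 / β ^ 2) * (1 + t ^ 2) := by nlinarith

lemma pow_mul_quadratic_le {r a b c : ℝ} (hr : 0 ≤ r) (ha : 0 ≤ a) (hb : 0 ≤ b) (hc : 0 ≤ c)
    (n : ℕ) : r ^ n * (a * r ^ 2 + b * r + c) ≤ (a + b + c) * (1 + r) ^ (n + 2) := by
  have hquad : a * r ^ 2 + b * r + c ≤ (a + b + c) * (1 + r) ^ 2 := by
    nlinarith [mul_nonneg ha hr, mul_nonneg hb hr, mul_nonneg hc hr, mul_nonneg ha (sq_nonneg r),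
      mul_nonneg hb (sq_nonneg r), mul_nonneg hc (sq_nonneg r)]
  calc r ^ n * (a * r ^ 2 + b * r + c) ≤ (1 + r) ^ n * ((a + b + c) * (1 + r) ^ 2) := by
        gcongr; linarith
    _ = (a + b + c) * (1 + r) ^ (n + 2) := by ring

lemma pow_le_rpow_of_pow_six_le {x y C : ℝ} (hx : 0 ≤ x) (hy : 0 ≤ y) (hC : 0 ≤ C)
    (h : x ^ 6 ≤ C * y) (j : ℕ) :
    x ^ (2 * j + 2) ≤ C ^ (((j : ℝ) + 1) / 3) * y ^ (((j : ℝ) + 1) / 3) := by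
  calc x ^ (2 * j + 2) = (x ^ 6) ^ (((j : ℝ) + 1) / 3) := by
        rw [← Real.rpow_natCast, ← Real.rpow_natCast x 6, ← Real.rpow_mul hx]
        congr 1; push_cast; ring
    _ ≤ (C * y) ^ (((j : ℝ) + 1) / 3) := by gcongr
    _ = C ^ (((j : ℝ) + 1) / 3) * y ^ (((j : ℝ) + 1) / 3) := Real.mul_rpow hC hy

section Norms

variable {𝕜 : Type*} [NormedDivisionRing 𝕜]

lemma norm_quadratic_le (a b c k : 𝕜) :
    ‖a * k ^ 2 - b * k - c‖ ≤ ‖a‖ * ‖k‖ ^ 2 + ‖b‖ * ‖k‖ + ‖c‖ := by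
  calc ‖a * k ^ 2 - b * k - c‖ ≤ ‖a * k ^ 2‖ + ‖b * k‖ + ‖c‖ :=
        (norm_sub_le _ _).trans (by gcongr; exact norm_sub_le _ _)
    _ = ‖a‖ * ‖k‖ ^ 2 + ‖b‖ * ‖k‖ + ‖c‖ := by rw [norm_mul, norm_mul, norm_pow]

lemma norm_cubic_ge (a b c k : 𝕜) :
    ‖a‖ * ‖k‖ ^ 3 - ‖b‖ * ‖k‖ ^ 2 - ‖c‖ * ‖k‖ ≤ ‖a * k ^ 3 - b * k ^ 2 - c * k‖ := by
  calc ‖a‖ * ‖k‖ ^ 3 - ‖b‖ * ‖k‖ ^ 2 - ‖c‖ * ‖k‖ = ‖a * k ^ 3‖ - ‖b * k ^ 2‖ - ‖c * k‖ := by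
        rw [norm_mul, norm_mul, norm_mul, norm_pow, norm_pow]
    _ ≤ ‖a * k ^ 3 - b * k ^ 2‖ - ‖c * k‖ := by gcongr; exact norm_sub_norm_le _ _
    _ ≤ ‖a * k ^ 3 - b * k ^ 2 - c * k‖ := norm_sub_norm_le _ _

end Norms

lemma norm_ofReal_add_I_le (x : ℝ) : ‖(x : ℂ) + I‖ ≤ |x| + 1 := by
  calc ‖(x : ℂ) + I‖ ≤ ‖(x : ℂ)‖ + ‖I‖ := norm_add_le _ _
    _ = |x| + 1 := by rw [norm_real, norm_I, Real.norm_eq_abs]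

section Dispersion

variable (α β δ : ℝ)

lemma I_mul_omegaHNLS (k : ℂ) :
    I * omegaHNLS α β δ k = β * k ^ 3 - α * k ^ 2 - δ * k := by
  simp only [omegaHNLS]
  linear_combination (-(β : ℂ) * k ^ 3 + α * k ^ 2 + δ * k) * I_sq

lemma hasDerivAt_I_mul_omegaHNLS (k : ℂ) :
    HasDerivAt (fun z => I * omegaHNLS α β δ z) (3 * β * k ^ 2 - 2 * α * k - δ) k := by
  simp only [I_mul_omegaHNLS]
  refine ((((hasDerivAt_pow 3 k).const_mul (β : ℂ)).sub
    ((hasDerivAt_pow 2 k).const_mul (α : ℂ))).sub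
    ((hasDerivAt_id k).const_mul (δ : ℂ))).congr_deriv ?_
  push_cast
  ring

lemma im_I_mul_omegaHNLS (a m : ℝ) :
    (I * omegaHNLS α β δ (a + I * m)).im = m * (3 * β * a ^ 2 - β * m ^ 2 - 2 * α * a - δ) := by
  simp only [I_mul_omegaHNLS, pow_succ, pow_zero, one_mul, sub_im, mul_im, ofReal_re, mul_re,
    add_re, I_re, zero_mul, I_im, ofReal_im, mul_zero, sub_self, add_zero, add_im, zero_add]
  ring

lemma im_I_mul_omegaHNLS_gammaOne {m : ℝ} (hβ : β ≠ 0)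
    (hR : 0 ≤ 3 * β ^ 2 * m ^ 2 + α ^ 2 + 3 * β * δ) :
    (I * omegaHNLS α β δ (gammaOne α β δ m)).im = 0 := by
  rw [gammaOne, im_I_mul_omegaHNLS, mul_eq_zero]
  right
  have hs := Real.sq_sqrt hR
  set s := √(3 * β ^ 2 * m ^ 2 + α ^ 2 + 3 * β * δ)
  set a := (α - s) / (3 * β)
  have ha : 3 * β * a = α - s := by simp only [a]; field_simp
  -- `3β` times the bracket is `(3βa - α)² - s²`
  refine (mul_eq_zero.1 (?_ : 3 * β * _ = 0)).resolve_left (by positivity)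
  linear_combination (3 * β * a - α - s) * ha + hs

lemma abs_tauGammaOne {m : ℝ} (hβ : β ≠ 0)
    (hR : 0 ≤ 3 * β ^ 2 * m ^ 2 + α ^ 2 + 3 * β * δ) :
    |tauGammaOne α β δ m| = ‖I * omegaHNLS α β δ (gammaOne α β δ m)‖ :=
  abs_re_eq_norm.2 (im_I_mul_omegaHNLS_gammaOne α β δ hβ hR)

lemma hasDerivAt_gammaOne {m : ℝ} (hβ : β ≠ 0)
    (hR : 0 < 3 * β ^ 2 * m ^ 2 + α ^ 2 + 3 * β * δ) :
    HasDerivAt (gammaOne α β δ)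
      ((-(β * m / √(3 * β ^ 2 * m ^ 2 + α ^ 2 + 3 * β * δ)) : ℝ) + I) m := by
  have hpoly : HasDerivAt (fun t : ℝ => 3 * β ^ 2 * t ^ 2 + α ^ 2 + 3 * β * δ)
      (6 * β ^ 2 * m) m := by
    refine ((((hasDerivAt_pow 2 m).const_mul (3 * β ^ 2)).add_const (α ^ 2)).add_const
      (3 * β * δ)).congr_deriv ?_
    push_cast
    ring
  have hre := (((Real.hasDerivAt_sqrt hR.ne').comp m hpoly).const_sub α).div_const (3 * β)
  have him := (hasDerivAt_id (m : ℂ)).comp_ofReal.const_mul I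
  refine (hre.ofReal_comp.add him).congr_deriv ?_
  have hs := (Real.sqrt_pos.2 hR).ne'
  rw [mul_one]
  congr 2
  field_simp
  ring

lemma hasDerivAt_tauGammaOne {m : ℝ} (hβ : β ≠ 0)
    (hR : 0 < 3 * β ^ 2 * m ^ 2 + α ^ 2 + 3 * β * δ) :
    HasDerivAt (tauGammaOne α β δ)
      (((3 * β * gammaOne α β δ m ^ 2 - 2 * α * gammaOne α β δ m - δ) *
        ((-(β * m / √(3 * β ^ 2 * m ^ 2 + α ^ 2 + 3 * β * δ)) : ℝ) + I)).re) m :=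
  reCLM.hasFDerivAt.comp_hasDerivAt m
    ((hasDerivAt_I_mul_omegaHNLS α β δ _).comp m (hasDerivAt_gammaOne α β δ hβ hR))

end Dispersion

lemma abs_deriv_tauGammaOne_le {α β δ m : ℝ} (hβ : 0 < β)
    (hm : β ^ 2 * m ^ 2 < 4 * (3 * β ^ 2 * m ^ 2 + α ^ 2 + 3 * β * δ)) :
    |deriv (tauGammaOne α β δ) m| ≤
      3 * (3 * β * ‖gammaOne α β δ m‖ ^ 2 + 2 * |α| * ‖gammaOne α β δ m‖ + |δ|) := by
  have hR : 0 < 3 * β ^ 2 * m ^ 2 + α ^ 2 + 3 * β * δ := by nlinarith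
  have hs := Real.sqrt_pos.2 hR
  have hslope : |β * m / √(3 * β ^ 2 * m ^ 2 + α ^ 2 + 3 * β * δ)| ≤ 2 := by
    rw [abs_div, abs_of_pos hs, div_le_iff₀ hs]
    refine abs_le_of_sq_le_sq ?_ (by positivity)
    rw [mul_pow, mul_pow, Real.sq_sqrt hR.le]
    linarith
  rw [(hasDerivAt_tauGammaOne α β δ hβ.ne' hR).deriv]
  refine (abs_re_le_norm _).trans ?_
  rw [norm_mul, mul_comm]
  gcongr
  · refine (norm_ofReal_add_I_le _).trans ?_
    rw [abs_neg]
    linarith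
  · refine (norm_quadratic_le _ _ _ _).trans_eq ?_
    simp [abs_of_pos hβ]

lemma sq_mul_sq_lt_four_mul_radicand {α β δ lam m : ℝ} (hβ : 0 < β)
    (hlam : α ^ 2 + 3 * β * δ ≤ 0 → 2 * √(-(α ^ 2 + 3 * β * δ)) / (3 * β) < lam)
    (hm : lam ≤ m) : β ^ 2 * m ^ 2 < 4 * (3 * β ^ 2 * m ^ 2 + α ^ 2 + 3 * β * δ) := by
  rcases le_or_gt (α ^ 2 + 3 * β * δ) 0 with hE | hE
  · have hroot := Real.sq_sqrt (neg_nonneg.2 hE)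
    have h3βm : 2 * √(-(α ^ 2 + 3 * β * δ)) < 3 * β * m := by
      rw [← div_lt_iff₀' (by positivity)]; linarith [hlam hE]
    have := mul_self_lt_mul_self (by positivity) h3βm
    nlinarith
  · nlinarith [sq_nonneg (β * m)]

theorem gammaOne_tau_deriv_bound_general (α β δ : ℝ) (hβ : 0 < β) (j : ℕ) (lam : ℝ)
    (hlam2 : α ^ 2 + 3 * β * δ ≤ 0 →
      2 * Real.sqrt (-(α ^ 2 + 3 * β * δ)) / (3 * β) < lam) :
    ∃ c > 0, ∀ m : ℝ, lam ≤ m →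
      ‖gammaOne α β δ m‖ ^ (2 * j) * |deriv (tauGammaOne α β δ) m| ≤
        c * (1 + tauGammaOne α β δ m ^ 2) ^ (((j : ℝ) + 1) / 3) := by
  obtain ⟨C, hC, hgrowth⟩ := one_add_pow_six_le_of_cubic_le hβ |α| |δ|
  set K := 3 * (3 * β + 2 * |α| + |δ|)
  refine ⟨K * C ^ (((j : ℝ) + 1) / 3), by positivity, fun m hm => ?_⟩
  have hR := sq_mul_sq_lt_four_mul_radicand hβ hlam2 hm
  set r := ‖gammaOne α β δ m‖
  have hτ : β * r ^ 3 - |α| * r ^ 2 - |δ| * r ≤ |tauGammaOne α β δ m| := by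
    rw [abs_tauGammaOne α β δ hβ.ne' (by nlinarith), I_mul_omegaHNLS]
    refine le_of_eq_of_le ?_ (norm_cubic_ge _ _ _ _)
    simp [r, abs_of_pos hβ]
  calc r ^ (2 * j) * |deriv (tauGammaOne α β δ) m|
      ≤ r ^ (2 * j) * (3 * (3 * β * r ^ 2 + 2 * |α| * r + |δ|)) := by
        gcongr; exact abs_deriv_tauGammaOne_le hβ hR
    _ = 3 * (r ^ (2 * j) * (3 * β * r ^ 2 + 2 * |α| * r + |δ|)) := by ring
    _ ≤ 3 * ((3 * β + 2 * |α| + |δ|) * (1 + r) ^ (2 * j + 2)) := by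
        gcongr 3 * ?_
        exact pow_mul_quadratic_le (norm_nonneg _) (by positivity) (by positivity)
          (abs_nonneg δ) _
    _ = K * (1 + r) ^ (2 * j + 2) := by ring
    _ ≤ K * (C ^ (((j : ℝ) + 1) / 3) *
          (1 + tauGammaOne α β δ m ^ 2) ^ (((j : ℝ) + 1) / 3)) := by
        gcongr
        exact pow_le_rpow_of_pow_six_le (by positivity) (by positivity) hC.le
          (hgrowth r _ (norm_nonneg _) hτ) j
    _ = K * C ^ (((j : ℝ) + 1) / 3) * (1 + tauGammaOne α β δ m ^ 2) ^ (((j : ℝ) + 1) / 3) :=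
        (mul_assoc _ _ _).symm

/-- Key pointwise bound: `|γ₁(m)|^{2j} |τ′(m)| ≤ c (1 + τ(m)²)^{(j+1)/3}` on `[λ, ∞)`. -/
theorem gammaOne_tau_deriv_bound (α β δ : ℝ) (hβ : 0 < β) (j : ℕ) (lam : ℝ)
    (hlam0 : 0 ≤ lam)
    (hlam1 : 0 < α ^ 2 + 3 * β * δ → lam = 0)
    (hlam2 : α ^ 2 + 3 * β * δ ≤ 0 →
      2 * Real.sqrt (-(α ^ 2 + 3 * β * δ)) / (3 * β) < lam) :
    ∃ c > 0, ∀ m : ℝ, lam ≤ m →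
      ‖gammaOne α β δ m‖ ^ (2 * j) * |deriv (tauGammaOne α β δ) m| ≤
        c * (1 + tauGammaOne α β δ m ^ 2) ^ (((j : ℝ) + 1) / 3) :=
  gammaOne_tau_deriv_bound_general α β δ hβ j lam hlam2
end

section
/- Let α, δ ∈ ℝ, β > 0, j ∈ ℕ, and let λ ≥ 0 satisfy λ = 0 if α² + 3βδ > 0 and λ > 2√(−(α² + 3βδ))/(3β) if α² + 3βδ ≤ 0. Define γ₁(m) := (α − √(3β²m² + α² + 3βδ))/(3β) + i·m for m ∈ [λ, ∞), and let τ(m) := i·ω(γ₁(m)), which is real-valued, with derivative τ′. Then there exists a constant c > 0, depending only on α, β, δ, λ, j, such that for every measurable function h : ℝ → ℂ, ∫_λ^∞ |γ₁(m)|^{2j} |h(τ(m))|² (τ′(m))² dm ≤ c ∫_ℝ (1 + σ²)^{(j+1)/3} |h(σ)|² dσ. -/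
open MeasureTheory

/-!
Write `A = α² + 3βδ` and `s = √(3β²m² + A)`. Then `τ` is a cubic in `s`,
`27β²τ = 8s³ - 6As - (2α³ + 9αβδ)`, and `τ′ = 2m(4β²m² + A)/s`. The choice of `λ` makes
`9β²m² + 4A > 0` for `m ≥ λ`, so that `s > 0`, `τ′ ≥ 0` and `βm ≤ 2s` there. Hence `|γ₁|²` and
`τ′` are `O(1 + s²)`, while `(1 + s²)³ = O(1 + τ²)`; together
`|γ₁|^{2j} τ′ ≤ c (1 + τ²)^{(j+1)/3}`. Bounding one factor `τ′` this way and substituting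
`σ = τ(m)` in what is left (`τ` is monotone on `[λ, ∞)`) gives the estimate.
-/

lemma mul_le_cube_add_sq_add {a s : ℝ} (ha : 0 ≤ a) (hs : 0 ≤ s) :
    a * s ≤ s ^ 3 + a ^ 2 + a := by
  rcases le_total s 1 with hs1 | hs1
  · nlinarith [mul_le_mul_of_nonneg_left hs1 ha, pow_nonneg hs 3, sq_nonneg a]
  rcases le_total a (s ^ 2) with has | has
  · nlinarith
  · nlinarith

lemma cube_le_two_mul_abs_cubic_add {a b s : ℝ} (hs : 0 ≤ s) :
    s ^ 3 ≤ 2 * |s ^ 3 - a * s - b| + (4 * a ^ 2 + 2 * |a| + 2 * |b|) := by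
  have h := mul_le_cube_add_sq_add (mul_nonneg zero_le_two (abs_nonneg a)) hs
  have hp := le_abs_self (s ^ 3 - a * s - b)
  have ha := mul_le_mul_of_nonneg_right (le_abs_self a) hs
  have hb := le_abs_self b
  nlinarith [sq_abs a]

lemma exists_one_add_sq_cube_le_mul_one_add_cubic_sq (a b : ℝ) :
    ∃ L > 0, ∀ s, 0 ≤ s → (1 + s ^ 2) ^ 3 ≤ L * (1 + (s ^ 3 - a * s - b) ^ 2) := by
  set M := 4 * a ^ 2 + 2 * |a| + 2 * |b|
  refine ⟨4 * (1 + 2 * M ^ 2) + 32, by positivity, fun s hs => ?_⟩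
  set p := s ^ 3 - a * s - b
  have hcube : s ^ 3 ≤ 2 * |p| + M := cube_le_two_mul_abs_cubic_add hs
  have hM : 0 ≤ M := by positivity
  have hsix : s ^ 6 ≤ 8 * p ^ 2 + 2 * M ^ 2 := by
    have := pow_le_pow_left₀ (by positivity) hcube 2
    nlinarith [sq_abs p, sq_nonneg (2 * |p| - M)]
  nlinarith [sq_nonneg (s ^ 2 - 1), sq_nonneg p, sq_nonneg s]

lemma pow_mul_le_mul_rpow_of_le_mul {x y u w K₁ K₂ L : ℝ} (n : ℕ) (hx : 0 ≤ x) (hy : 0 ≤ y)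
    (hu : 0 ≤ u) (hw : 0 ≤ w) (hK₁ : 0 ≤ K₁) (hK₂ : 0 ≤ K₂) (hL : 0 ≤ L)
    (hxu : x ≤ K₁ * u) (hyu : y ≤ K₂ * u) (huw : u ^ 3 ≤ L * w) :
    x ^ n * y ≤ K₁ ^ n * K₂ * L ^ (((n : ℝ) + 1) / 3) * w ^ (((n : ℝ) + 1) / 3) := by
  have hcube : u ^ (n + 1) = (u ^ 3) ^ (((n : ℝ) + 1) / 3) := by
    rw [← Real.rpow_natCast u 3, ← Real.rpow_mul hu, ← Real.rpow_natCast]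
    push_cast
    ring_nf
  calc x ^ n * y ≤ (K₁ * u) ^ n * (K₂ * u) :=
        mul_le_mul (pow_le_pow_left₀ hx hxu n) hyu hy (by positivity)
    _ = K₁ ^ n * K₂ * u ^ (n + 1) := by ring
    _ ≤ K₁ ^ n * K₂ * (L * w) ^ (((n : ℝ) + 1) / 3) := by
        rw [hcube]
        gcongr
    _ = K₁ ^ n * K₂ * L ^ (((n : ℝ) + 1) / 3) * w ^ (((n : ℝ) + 1) / 3) := by
        rw [Real.mul_rpow hL hw]; ring

lemma setLIntegral_ofReal_deriv_mul_comp_le {f f' : ℝ → ℝ} {s : Set ℝ} (hs : MeasurableSet s)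
    (hconv : Convex ℝ s) (hf : ∀ x ∈ s, HasDerivAt f (f' x) x) (hf' : ∀ x ∈ s, 0 ≤ f' x)
    (u : ℝ → ENNReal) :
    ∫⁻ x in s, ENNReal.ofReal (f' x) * u (f x) ≤ ∫⁻ y, u y := by
  have hmono : MonotoneOn f s := by
    refine monotoneOn_of_deriv_nonneg hconv
      (fun x hx => (hf x hx).continuousAt.continuousWithinAt)
      (fun x hx => (hf x (interior_subset hx)).differentiableAt.differentiableWithinAt)
      (fun x hx => ?_)
    rw [(hf x (interior_subset hx)).deriv]
    exact hf' x (interior_subset hx)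
  rw [← lintegral_image_eq_lintegral_deriv_mul_of_monotoneOn hs
    (fun x hx => (hf x hx).hasDerivWithinAt) hmono]
  exact setLIntegral_le_lintegral _ _

lemma re_I_mul_omegaHNLS (α β δ x y : ℝ) :
    (Complex.I * omegaHNLS α β δ (x + Complex.I * y)).re
      = β * (x ^ 3 - 3 * x * y ^ 2) - α * (x ^ 2 - y ^ 2) - δ * x := by
  simp only [omegaHNLS, pow_succ, pow_zero, one_mul, Complex.mul_re, Complex.mul_im,
    Complex.add_re, Complex.add_im, Complex.neg_re, Complex.neg_im, Complex.I_re, Complex.I_im,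
    Complex.ofReal_re, Complex.ofReal_im]
  ring

section Curve

variable {α β δ m : ℝ}

lemma norm_gammaOne_sq :
    ‖gammaOne α β δ m‖ ^ 2
      = ((α - Real.sqrt (3 * β ^ 2 * m ^ 2 + α ^ 2 + 3 * β * δ)) / (3 * β)) ^ 2 + m ^ 2 := by
  rw [gammaOne, Complex.sq_norm, mul_comm Complex.I, Complex.normSq_add_mul_I]

lemma norm_gammaOne_sq_le (hβ : β ≠ 0) (hq : 0 ≤ 3 * β ^ 2 * m ^ 2 + α ^ 2 + 3 * β * δ) :
    ‖gammaOne α β δ m‖ ^ 2 ≤ (2 * α ^ 2 + 3 * |α ^ 2 + 3 * β * δ| + 5) / (9 * β ^ 2)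
      * (1 + (3 * β ^ 2 * m ^ 2 + α ^ 2 + 3 * β * δ)) := by
  rw [norm_gammaOne_sq]
  set s := Real.sqrt (3 * β ^ 2 * m ^ 2 + α ^ 2 + 3 * β * δ)
  have hs : s ^ 2 = 3 * β ^ 2 * m ^ 2 + α ^ 2 + 3 * β * δ := Real.sq_sqrt hq
  have hscaled : 9 * β ^ 2 * (((α - s) / (3 * β)) ^ 2 + m ^ 2)
      = (α - s) ^ 2 + 3 * (s ^ 2 - (α ^ 2 + 3 * β * δ)) := by
    rw [hs]
    field_simp
    ring
  rw [div_mul_eq_mul_div, le_div_iff₀ (by positivity), mul_comm, hscaled]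
  nlinarith [sq_nonneg (α + s), neg_abs_le (α ^ 2 + 3 * β * δ), abs_nonneg (α ^ 2 + 3 * β * δ)]

lemma tauGammaOne_cubic (hβ : β ≠ 0) (hq : 0 ≤ 3 * β ^ 2 * m ^ 2 + α ^ 2 + 3 * β * δ) :
    27 * β ^ 2 * tauGammaOne α β δ m
      = 8 * Real.sqrt (3 * β ^ 2 * m ^ 2 + α ^ 2 + 3 * β * δ) ^ 3
        - 6 * (α ^ 2 + 3 * β * δ) * Real.sqrt (3 * β ^ 2 * m ^ 2 + α ^ 2 + 3 * β * δ)
        - (2 * α ^ 3 + 9 * α * β * δ) := by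
  rw [tauGammaOne, gammaOne, re_I_mul_omegaHNLS]
  set s := Real.sqrt (3 * β ^ 2 * m ^ 2 + α ^ 2 + 3 * β * δ)
  have hm : m ^ 2 = (s ^ 2 - (α ^ 2 + 3 * β * δ)) / (3 * β ^ 2) := by
    rw [Real.sq_sqrt hq]
    field_simp
    ring
  rw [hm]
  field_simp
  ring

noncomputable def tauGammaOneDeriv (α β δ m : ℝ) : ℝ :=
  2 * m * (4 * β ^ 2 * m ^ 2 + (α ^ 2 + 3 * β * δ))
    / Real.sqrt (3 * β ^ 2 * m ^ 2 + α ^ 2 + 3 * β * δ)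

open Filter Topology in
lemma hasDerivAt_tauGammaOne_s17 (hβ : β ≠ 0) (hq : 0 < 3 * β ^ 2 * m ^ 2 + α ^ 2 + 3 * β * δ) :
    HasDerivAt (tauGammaOne α β δ) (tauGammaOneDeriv α β δ m) m := by
  have hQ : HasDerivAt (fun t => 3 * β ^ 2 * t ^ 2 + α ^ 2 + 3 * β * δ)
      (3 * β ^ 2 * (2 * m)) m := by
    simpa using (((hasDerivAt_pow 2 m).const_mul (3 * β ^ 2)).add_const (α ^ 2)).add_const
      (3 * β * δ)
  have hS := hQ.sqrt hq.ne'
  have hcubic : tauGammaOne α β δ =ᶠ[𝓝 m] fun t =>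
      (8 * Real.sqrt (3 * β ^ 2 * t ^ 2 + α ^ 2 + 3 * β * δ) ^ 3
        - 6 * (α ^ 2 + 3 * β * δ) * Real.sqrt (3 * β ^ 2 * t ^ 2 + α ^ 2 + 3 * β * δ)
        - (2 * α ^ 3 + 9 * α * β * δ)) / (27 * β ^ 2) := by
    filter_upwards [hQ.continuousAt.eventually (lt_mem_nhds hq)] with t ht
    rw [eq_div_iff (by positivity), mul_comm]
    exact tauGammaOne_cubic hβ ht.le
  refine (((((hS.pow 3).const_mul 8).sub (hS.const_mul _)).sub_const _).div_const _
    |>.congr_of_eventuallyEq hcubic).congr_deriv ?_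
  have hs := Real.sq_sqrt hq.le
  have hspos := Real.sqrt_pos.mpr hq
  set s := Real.sqrt (3 * β ^ 2 * m ^ 2 + α ^ 2 + 3 * β * δ)
  rw [tauGammaOneDeriv]
  field_simp
  linear_combination (72 * m * s) * hs

lemma nine_mul_sq_add_four_mul_pos {lam : ℝ} (hβ : 0 < β)
    (hlam2 : α ^ 2 + 3 * β * δ ≤ 0 → 2 * Real.sqrt (-(α ^ 2 + 3 * β * δ)) / (3 * β) < lam)
    (hm : lam ≤ m) :
    0 < 9 * β ^ 2 * m ^ 2 + 4 * (α ^ 2 + 3 * β * δ) := by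
  rcases lt_or_ge 0 (α ^ 2 + 3 * β * δ) with hA | hA
  · positivity
  have hlam : 2 * Real.sqrt (-(α ^ 2 + 3 * β * δ)) < 3 * β * m := by
    have := hlam2 hA
    rw [div_lt_iff₀ (by positivity)] at this
    nlinarith
  nlinarith [Real.sq_sqrt (neg_nonneg.mpr hA), Real.sqrt_nonneg (-(α ^ 2 + 3 * β * δ))]

lemma gammaOne_radicand_pos (hm : 0 < 9 * β ^ 2 * m ^ 2 + 4 * (α ^ 2 + 3 * β * δ)) :
    0 < 3 * β ^ 2 * m ^ 2 + α ^ 2 + 3 * β * δ := by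
  rcases le_total 0 (α ^ 2 + 3 * β * δ) with hA | hA <;> nlinarith [sq_nonneg (β * m)]

lemma tauGammaOneDeriv_nonneg (hm0 : 0 ≤ m)
    (hm : 0 < 9 * β ^ 2 * m ^ 2 + 4 * (α ^ 2 + 3 * β * δ)) :
    0 ≤ tauGammaOneDeriv α β δ m := by
  have : 0 ≤ 4 * β ^ 2 * m ^ 2 + (α ^ 2 + 3 * β * δ) := by nlinarith [sq_nonneg (β * m)]
  exact div_nonneg (mul_nonneg (mul_nonneg zero_le_two hm0) this) (Real.sqrt_nonneg _)

lemma tauGammaOneDeriv_le (hβ : 0 < β)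
    (hm : 0 < 9 * β ^ 2 * m ^ 2 + 4 * (α ^ 2 + 3 * β * δ)) :
    tauGammaOneDeriv α β δ m ≤ 12 / β * (3 * β ^ 2 * m ^ 2 + α ^ 2 + 3 * β * δ) := by
  have hq := gammaOne_radicand_pos hm
  have hs := Real.sq_sqrt hq.le
  have hspos := Real.sqrt_pos.mpr hq
  set s := Real.sqrt (3 * β ^ 2 * m ^ 2 + α ^ 2 + 3 * β * δ)
  have hβm : β * m ≤ 2 * s := by nlinarith
  rw [tauGammaOneDeriv, div_le_iff₀ hspos, ← hs, div_mul_eq_mul_div, div_mul_eq_mul_div,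
    le_div_iff₀ hβ]
  nlinarith [mul_le_mul_of_nonneg_right hβm (by positivity : 0 ≤ 6 * s ^ 2), sq_nonneg (β * m)]

lemma exists_one_add_radicand_cube_le (hβ : β ≠ 0) :
    ∃ L > 0, ∀ m, 0 ≤ 3 * β ^ 2 * m ^ 2 + α ^ 2 + 3 * β * δ →
      (1 + (3 * β ^ 2 * m ^ 2 + α ^ 2 + 3 * β * δ)) ^ 3 ≤ L * (1 + tauGammaOne α β δ m ^ 2) := by
  obtain ⟨L, hL, hcubic⟩ := exists_one_add_sq_cube_le_mul_one_add_cubic_sq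
    (3 / 4 * (α ^ 2 + 3 * β * δ)) ((2 * α ^ 3 + 9 * α * β * δ) / 8)
  set k := 27 * β ^ 2 / 8
  refine ⟨L * (1 + k ^ 2), by positivity, fun m hq => ?_⟩
  set s := Real.sqrt (3 * β ^ 2 * m ^ 2 + α ^ 2 + 3 * β * δ)
  have hs : s ^ 2 = 3 * β ^ 2 * m ^ 2 + α ^ 2 + 3 * β * δ := Real.sq_sqrt hq
  have hτ : s ^ 3 - 3 / 4 * (α ^ 2 + 3 * β * δ) * s - (2 * α ^ 3 + 9 * α * β * δ) / 8
      = k * tauGammaOne α β δ m := by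
    linear_combination (-1 / 8 : ℝ) * tauGammaOne_cubic hβ hq
  calc (1 + (3 * β ^ 2 * m ^ 2 + α ^ 2 + 3 * β * δ)) ^ 3
      ≤ L * (1 + (k * tauGammaOne α β δ m) ^ 2) := by
        rw [← hs, ← hτ]
        exact hcubic s (Real.sqrt_nonneg _)
    _ ≤ L * (1 + k ^ 2) * (1 + tauGammaOne α β δ m ^ 2) := by
        rw [mul_assoc]
        gcongr
        nlinarith [mul_nonneg (sq_nonneg k) (sq_nonneg (tauGammaOne α β δ m))]

lemma exists_norm_gammaOne_pow_mul_tauGammaOneDeriv_le {lam : ℝ} (hβ : 0 < β) (hlam0 : 0 ≤ lam)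
    (hlam2 : α ^ 2 + 3 * β * δ ≤ 0 → 2 * Real.sqrt (-(α ^ 2 + 3 * β * δ)) / (3 * β) < lam)
    (j : ℕ) :
    ∃ c > 0, ∀ m, lam ≤ m → ‖gammaOne α β δ m‖ ^ (2 * j) * tauGammaOneDeriv α β δ m
      ≤ c * (1 + tauGammaOne α β δ m ^ 2) ^ (((j : ℝ) + 1) / 3) := by
  obtain ⟨L, hL, hcube⟩ := exists_one_add_radicand_cube_le (α := α) (δ := δ) hβ.ne'
  set K := (2 * α ^ 2 + 3 * |α ^ 2 + 3 * β * δ| + 5) / (9 * β ^ 2)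
  have hK : 0 < K := by positivity
  refine ⟨K ^ j * (12 / β) * L ^ (((j : ℝ) + 1) / 3), by positivity, fun m hm => ?_⟩
  have hm0 : 0 ≤ m := hlam0.trans hm
  have hbranch := nine_mul_sq_add_four_mul_pos hβ hlam2 hm
  have hq := (gammaOne_radicand_pos hbranch).le
  rw [pow_mul]
  exact pow_mul_le_mul_rpow_of_le_mul j (sq_nonneg _) (tauGammaOneDeriv_nonneg hm0 hbranch)
    (by positivity) (by positivity) hK.le (by positivity) hL.le
    (norm_gammaOne_sq_le hβ.ne' hq)
    ((tauGammaOneDeriv_le hβ hbranch).trans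
      (mul_le_mul_of_nonneg_left (by linarith) (by positivity))) (hcube m hq)

end Curve

theorem gammaOne_change_of_variables_bound_general (α β δ : ℝ) (hβ : 0 < β) (j : ℕ) (lam : ℝ)
    (hlam0 : 0 ≤ lam)
    (hlam2 : α ^ 2 + 3 * β * δ ≤ 0 →
      2 * Real.sqrt (-(α ^ 2 + 3 * β * δ)) / (3 * β) < lam) :
    ∃ c > 0, ∀ h : ℝ → ℂ, Measurable h →
      (∫⁻ m in Set.Ici lam,
          ENNReal.ofReal
            (‖gammaOne α β δ m‖ ^ (2 * j) *
              ‖h (tauGammaOne α β δ m)‖ ^ 2 * (deriv (tauGammaOne α β δ) m) ^ 2)) ≤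
        ENNReal.ofReal c *
          ∫⁻ σ : ℝ, ENNReal.ofReal ((1 + σ ^ 2) ^ (((j : ℝ) + 1) / 3) * ‖h σ‖ ^ 2) := by
  obtain ⟨c, hc, hbound⟩ := exists_norm_gammaOne_pow_mul_tauGammaOneDeriv_le hβ hlam0 hlam2 j
  refine ⟨c, hc, fun h _ => ?_⟩
  set G : ℝ → ENNReal := fun σ => ENNReal.ofReal ((1 + σ ^ 2) ^ (((j : ℝ) + 1) / 3) * ‖h σ‖ ^ 2)
  have hbranch (m) (hm : m ∈ Set.Ici lam) := nine_mul_sq_add_four_mul_pos hβ hlam2 hm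
  have hderiv (m) (hm : m ∈ Set.Ici lam) :
      HasDerivAt (tauGammaOne α β δ) (tauGammaOneDeriv α β δ m) m :=
    hasDerivAt_tauGammaOne_s17 hβ.ne' (gammaOne_radicand_pos (hbranch m hm))
  have hderiv_nonneg (m) (hm : m ∈ Set.Ici lam) : 0 ≤ tauGammaOneDeriv α β δ m :=
    tauGammaOneDeriv_nonneg (hlam0.trans hm) (hbranch m hm)
  calc ∫⁻ m in Set.Ici lam, ENNReal.ofReal (‖gammaOne α β δ m‖ ^ (2 * j) *
          ‖h (tauGammaOne α β δ m)‖ ^ 2 * (deriv (tauGammaOne α β δ) m) ^ 2)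
      ≤ ∫⁻ m in Set.Ici lam, ENNReal.ofReal (tauGammaOneDeriv α β δ m) *
          (ENNReal.ofReal c * G (tauGammaOne α β δ m)) := by
        refine setLIntegral_mono' measurableSet_Ici fun m hm => ?_
        have hT := hderiv_nonneg m hm
        rw [(hderiv m hm).deriv, ← ENNReal.ofReal_mul hc.le, ← ENNReal.ofReal_mul hT]
        refine ENNReal.ofReal_le_ofReal ?_
        have := mul_le_mul_of_nonneg_right (hbound m hm)
          (mul_nonneg hT (sq_nonneg ‖h (tauGammaOne α β δ m)‖))
        linarith
    _ = ENNReal.ofReal c * ∫⁻ m in Set.Ici lam,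
          ENNReal.ofReal (tauGammaOneDeriv α β δ m) * G (tauGammaOne α β δ m) := by
        rw [← lintegral_const_mul' _ _ ENNReal.ofReal_ne_top]
        simp only [mul_left_comm]
    _ ≤ ENNReal.ofReal c * ∫⁻ σ, G σ :=
        mul_le_mul_right (setLIntegral_ofReal_deriv_mul_comp_le measurableSet_Ici
          (convex_Ici lam) hderiv hderiv_nonneg G) _

/-- Weighted change-of-variables estimate along the left branch of `∂D⁺`:
`∫_λ^∞ |γ₁(m)|^{2j} |h(τ(m))|² (τ′(m))² dm ≤ c ∫_ℝ (1 + σ²)^{(j+1)/3} |h(σ)|² dσ`. -/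
theorem gammaOne_change_of_variables_bound (α β δ : ℝ) (hβ : 0 < β) (j : ℕ) (lam : ℝ)
    (hlam0 : 0 ≤ lam)
    (hlam1 : 0 < α ^ 2 + 3 * β * δ → lam = 0)
    (hlam2 : α ^ 2 + 3 * β * δ ≤ 0 →
      2 * Real.sqrt (-(α ^ 2 + 3 * β * δ)) / (3 * β) < lam) :
    ∃ c > 0, ∀ h : ℝ → ℂ, Measurable h →
      (∫⁻ m in Set.Ici lam,
          ENNReal.ofReal
            (‖gammaOne α β δ m‖ ^ (2 * j) *
              ‖h (tauGammaOne α β δ m)‖ ^ 2 * (deriv (tauGammaOne α β δ) m) ^ 2)) ≤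
        ENNReal.ofReal c *
          ∫⁻ σ : ℝ, ENNReal.ofReal ((1 + σ ^ 2) ^ (((j : ℝ) + 1) / 3) * ‖h σ‖ ^ 2) :=
  gammaOne_change_of_variables_bound_general α β δ hβ j lam hlam0 hlam2
end

section
/- Let α, δ ∈ ℝ, β > 0, and let λ ≥ 0 satisfy λ = 0 if α² + 3βδ > 0 and λ > 2√(−(α² + 3βδ))/(3β) if α² + 3βδ ≤ 0. Define γ₁(m) := (α − √(3β²m² + α² + 3βδ))/(3β) + i·m for m ∈ [λ, ∞). Then: (a) Re(ω(γ₁(m))) = 0 for every m ≥ λ, so that τ(m) := i·ω(γ₁(m)) is real-valued; and (b) τ is strictly monotone increasing on [λ, ∞) with τ(m) → ∞ as m → ∞. -/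
open MeasureTheory

/-!
Write `c = α² + 3βδ` and `u = √(3β²m² + c)`. For `k = x + im`, `Re ω(k) = m(3βx² − 2αx − δ − βm²)`,
and `x = (α − u)/(3β)` is a root of the quadratic factor, so `ω` is purely imaginary on `γ₁`.
Substituting the same `x` into `Re(iω(k))` gives `τ(m) = (8u³ − 6cu + α³ − 3αc)/(27β²)`. This cubic
has derivative `(24u² − 6c)/(27β²)`, so it increases for `u ≥ √c/2` (reading `√c = 0` for `c < 0`),
which holds since `u ≥ √c`; and `u` increases with `m ≥ 0`. The condition on `λ` makes
`3β²m² + c ≥ 0` for `m ≥ λ`, so that the square root is not truncated.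
-/

open Complex Filter Set

noncomputable def tauCubic (α β δ x : ℝ) : ℝ :=
  (8 * x ^ 3 - 6 * (α ^ 2 + 3 * β * δ) * x + α ^ 3 - 3 * α * (α ^ 2 + 3 * β * δ)) / (27 * β ^ 2)

noncomputable def discRoot (α β δ m : ℝ) : ℝ :=
  √(3 * β ^ 2 * m ^ 2 + α ^ 2 + 3 * β * δ)

section

variable {α β δ : ℝ}

lemma omegaHNLS_re (x m : ℝ) :
    (omegaHNLS α β δ (x + I * m)).re = m * (3 * β * x ^ 2 - 2 * α * x - δ - β * m ^ 2) := by
  simp only [omegaHNLS, pow_succ, pow_zero, one_mul, add_re, add_im, mul_re, mul_im, neg_re, neg_im,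
    I_re, I_im, ofReal_re, ofReal_im]
  ring

lemma I_mul_omegaHNLS_re (x m : ℝ) :
    (I * omegaHNLS α β δ (x + I * m)).re =
      β * (x ^ 3 - 3 * x * m ^ 2) - α * (x ^ 2 - m ^ 2) - δ * x := by
  simp only [omegaHNLS, pow_succ, pow_zero, one_mul, add_re, add_im, mul_re, mul_im, neg_re, neg_im,
    I_re, I_im, ofReal_re, ofReal_im]
  ring

lemma omegaHNLS_re_eq_zero_of_sq_eq {u m : ℝ} (hβ : β ≠ 0)
    (hu : u ^ 2 = 3 * β ^ 2 * m ^ 2 + α ^ 2 + 3 * β * δ) :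
    (omegaHNLS α β δ (((α - u) / (3 * β) : ℝ) + I * m)).re = 0 := by
  rw [omegaHNLS_re]
  field_simp
  linear_combination m * hu

lemma I_mul_omegaHNLS_re_eq_tauCubic {u m : ℝ} (hβ : β ≠ 0)
    (hu : u ^ 2 = 3 * β ^ 2 * m ^ 2 + α ^ 2 + 3 * β * δ) :
    (I * omegaHNLS α β δ (((α - u) / (3 * β) : ℝ) + I * m)).re = tauCubic α β δ u := by
  rw [I_mul_omegaHNLS_re, tauCubic]
  field_simp
  linear_combination (-243 * u) * hu

lemma tauCubic_strictMonoOn (hβ : β ≠ 0) :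
    StrictMonoOn (tauCubic α β δ) (Ici (√(α ^ 2 + 3 * β * δ) / 2)) := by
  intro x hx y _ hxy
  rw [mem_Ici] at hx
  obtain ⟨hx0, hcx⟩ := Real.sqrt_le_iff.1 (show √(α ^ 2 + 3 * β * δ) ≤ 2 * x by linarith)
  have hslope : 0 < 8 * (y ^ 2 + x * y + x ^ 2) - 6 * (α ^ 2 + 3 * β * δ) := by
    nlinarith
  unfold tauCubic
  gcongr ?_ / _
  nlinarith [mul_pos (sub_pos.2 hxy) hslope]

lemma tendsto_tauCubic_atTop (hβ : β ≠ 0) : Tendsto (tauCubic α β δ) atTop atTop := by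
  have hquad : Tendsto (fun x : ℝ => 8 * x ^ 2 - 6 * (α ^ 2 + 3 * β * δ)) atTop atTop :=
    tendsto_atTop_add_const_right _ _ ((tendsto_pow_atTop two_ne_zero).const_mul_atTop (by norm_num))
  have hcubic := tendsto_atTop_add_const_right _ (α ^ 3 - 3 * α * (α ^ 2 + 3 * β * δ))
    (tendsto_id.atTop_mul_atTop₀ hquad)
  refine (hcubic.atTop_div_const (by positivity : (0 : ℝ) < 27 * β ^ 2)).congr fun x => ?_
  simp only [tauCubic, id]
  ring

lemma sqrt_div_two_le_discRoot (m : ℝ) : √(α ^ 2 + 3 * β * δ) / 2 ≤ discRoot α β δ m :=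
  calc √(α ^ 2 + 3 * β * δ) / 2 ≤ √(α ^ 2 + 3 * β * δ) := half_le_self (Real.sqrt_nonneg _)
    _ ≤ discRoot α β δ m := Real.sqrt_le_sqrt (by nlinarith [sq_nonneg (β * m)])

lemma discRoot_strictMonoOn {lam : ℝ} (hβ : β ≠ 0) (hlam : 0 ≤ lam)
    (hdisc : 0 ≤ 3 * β ^ 2 * lam ^ 2 + α ^ 2 + 3 * β * δ) :
    StrictMonoOn (discRoot α β δ) (Ici lam) := by
  intro m₁ hm₁ m₂ _ hm
  rw [mem_Ici] at hm₁
  have hβ2 : 0 < β ^ 2 := by positivity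
  have hsq : lam ^ 2 ≤ m₁ ^ 2 := pow_le_pow_left₀ hlam hm₁ 2
  have hsq' : m₁ ^ 2 < m₂ ^ 2 := pow_lt_pow_left₀ hm (hlam.trans hm₁) two_ne_zero
  exact Real.sqrt_lt_sqrt (by nlinarith) (by nlinarith)

lemma tendsto_discRoot_atTop (hβ : β ≠ 0) : Tendsto (discRoot α β δ) atTop atTop := by
  refine Real.tendsto_sqrt_atTop.comp ?_
  refine tendsto_atTop_add_const_right _ _ (tendsto_atTop_add_const_right _ _ ?_)
  exact (tendsto_pow_atTop two_ne_zero).const_mul_atTop (by positivity)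

lemma disc_nonneg_of_lt {m : ℝ} (hβ : 0 < β)
    (hm : α ^ 2 + 3 * β * δ ≤ 0 → 2 * √(-(α ^ 2 + 3 * β * δ)) / (3 * β) < m) :
    0 ≤ 3 * β ^ 2 * m ^ 2 + α ^ 2 + 3 * β * δ := by
  rcases lt_or_ge 0 (α ^ 2 + 3 * β * δ) with hc | hc
  · nlinarith [sq_nonneg (β * m)]
  · have h := (div_lt_iff₀ (by positivity)).1 (hm hc)
    have hsq : 4 * -(α ^ 2 + 3 * β * δ) < (3 * β * m) ^ 2 := by
      calc 4 * -(α ^ 2 + 3 * β * δ) = (2 * √(-(α ^ 2 + 3 * β * δ))) ^ 2 := by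
            rw [mul_pow, Real.sq_sqrt (neg_nonneg.2 hc)]; ring
        _ < (3 * β * m) ^ 2 := pow_lt_pow_left₀ (by linarith) (by positivity) two_ne_zero
    nlinarith

end

theorem tauGammaOne_real_strictMono_tendsto_general (α β δ : ℝ) (hβ : 0 < β) (lam : ℝ)
    (hlam0 : 0 ≤ lam)
    (hlam2 : α ^ 2 + 3 * β * δ ≤ 0 →
      2 * Real.sqrt (-(α ^ 2 + 3 * β * δ)) / (3 * β) < lam) :
    (∀ m : ℝ, lam ≤ m → (omegaHNLS α β δ (gammaOne α β δ m)).re = 0) ∧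
    StrictMonoOn (tauGammaOne α β δ) (Set.Ici lam) ∧
    Filter.Tendsto (tauGammaOne α β δ) Filter.atTop Filter.atTop := by
  have hdisc (m : ℝ) (hm : lam ≤ m) : 0 ≤ 3 * β ^ 2 * m ^ 2 + α ^ 2 + 3 * β * δ :=
    disc_nonneg_of_lt hβ fun hc => (hlam2 hc).trans_le hm
  have htau : EqOn (tauCubic α β δ ∘ discRoot α β δ) (tauGammaOne α β δ) (Ici lam) :=
    fun m hm => (I_mul_omegaHNLS_re_eq_tauCubic hβ.ne' (Real.sq_sqrt (hdisc m hm))).symm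
  refine ⟨fun m hm => omegaHNLS_re_eq_zero_of_sq_eq hβ.ne' (Real.sq_sqrt (hdisc m hm)), ?_, ?_⟩
  · have hmono : StrictMonoOn (tauCubic α β δ ∘ discRoot α β δ) (Ici lam) :=
      (tauCubic_strictMonoOn hβ.ne').comp (discRoot_strictMonoOn hβ.ne' hlam0 (hdisc lam le_rfl))
        fun m _ => sqrt_div_two_le_discRoot m
    exact hmono.congr htau
  · have hlim : Tendsto (tauCubic α β δ ∘ discRoot α β δ) atTop atTop :=
      (tendsto_tauCubic_atTop hβ.ne').comp (tendsto_discRoot_atTop hβ.ne')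
    exact hlim.congr' (eventually_atTop.2 ⟨lam, fun m hm => htau hm⟩)

/-- (a) `ω` is purely imaginary along the left branch of `∂D⁺`, so `τ(m) = i·ω(γ₁(m))` is
real-valued; (b) `τ` is strictly monotone increasing on `[λ, ∞)` and `τ(m) → ∞` as `m → ∞`. -/
theorem tauGammaOne_real_strictMono_tendsto (α β δ : ℝ) (hβ : 0 < β) (lam : ℝ)
    (hlam0 : 0 ≤ lam)
    (hlam1 : 0 < α ^ 2 + 3 * β * δ → lam = 0)
    (hlam2 : α ^ 2 + 3 * β * δ ≤ 0 →
      2 * Real.sqrt (-(α ^ 2 + 3 * β * δ)) / (3 * β) < lam) :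
    (∀ m : ℝ, lam ≤ m → (omegaHNLS α β δ (gammaOne α β δ m)).re = 0) ∧
    StrictMonoOn (tauGammaOne α β δ) (Set.Ici lam) ∧
    Filter.Tendsto (tauGammaOne α β δ) Filter.atTop Filter.atTop :=
  tauGammaOne_real_strictMono_tendsto_general α β δ hβ lam hlam0 hlam2
end
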